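/- Let R_0 ∈ ℝ^m with R_0 ≤ 0, and consider the full-output-feedback iteration Δ_t := h_max(R_t), R_{t+1} := R_t + BΔ_t. Then: (i) R_t ≤ 0 for all t ∈ ℕ; (ii) the partial sums V̂_t := ∑_{τ=0}^{t} Δ_τ satisfy the value-iteration recursion V̂_{t+1} = T_{R_0}(V̂_t), where T_{R_0}(V)^i := max_{j ∈ U_i} (R_0^j + γ(FV)^j); and (iii) ‖V*_{R_0} − V̂_t‖_∞ ≤ γ^t ‖V*_{R_0} − h_max(R_0)‖_∞ for all t. -/
import Mathlib


open Matrix MeasureTheory Filter Topology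

noncomputable section

/-- The policy matrix `Π` of a deterministic policy `π`. -/
def polMat {n m : ℕ} (π : Fin n → Fin m) : Matrix (Fin n) (Fin m) ℝ :=
  Matrix.of fun i j => if j = π i then 1 else 0

/-- The matrix `S` with `S^j_i = 1` iff `s j = i`. -/
def projMat {n m : ℕ} (s : Fin m → Fin n) : Matrix (Fin m) (Fin n) ℝ :=
  Matrix.of fun j i => if s j = i then 1 else 0

/-- A row-stochastic matrix: nonnegative entries, rows summing to one. -/
def RowStochastic {n m : ℕ} (F : Matrix (Fin m) (Fin n) ℝ) : Prop :=
  (∀ j i, 0 ≤ F j i) ∧ ∀ j, ∑ i, F j i = 1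

/-- A deterministic policy: a section of the state projection `s`. -/
def IsPolicy {n m : ℕ} (s : Fin m → Fin n) (π : Fin n → Fin m) : Prop :=
  ∀ i, s (π i) = i

/-- The value vector `V_{π,R} = (I − γΠF)⁻¹ Π R`. -/
def valueVec {n m : ℕ} (γ : ℝ) (F : Matrix (Fin m) (Fin n) ℝ)
    (π : Fin n → Fin m) (R : Fin m → ℝ) : Fin n → ℝ :=
  ((1 : Matrix (Fin n) (Fin n) ℝ) - γ • (polMat π * F))⁻¹ *ᵥ (polMat π *ᵥ R)

/-- A policy is optimal for `R` when its value vector dominates all others componentwise. -/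
def IsOptimal {n m : ℕ} (s : Fin m → Fin n) (γ : ℝ) (F : Matrix (Fin m) (Fin n) ℝ)
    (R : Fin m → ℝ) (π : Fin n → Fin m) : Prop :=
  IsPolicy s π ∧ ∀ π', IsPolicy s π' → ∀ i, valueVec γ F π' R i ≤ valueVec γ F π R i

/-- `hmax R i = max_{j ∈ U_i} R j`. -/
def hmax {n m : ℕ} (s : Fin m → Fin n) (R : Fin m → ℝ) (i : Fin n) : ℝ :=
  sSup {x | ∃ j, s j = i ∧ R j = x}

section Aux

variable {n m : ℕ}

lemma hmax_set_finite (s : Fin m → Fin n) (R : Fin m → ℝ) (i : Fin n) :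
    {x | ∃ j, s j = i ∧ R j = x}.Finite :=
  (Set.finite_range R).subset (by rintro x ⟨j, _, rfl⟩; exact ⟨j, rfl⟩)

lemma hmax_exists (s : Fin m → Fin n) (hs : Function.Surjective s) (R : Fin m → ℝ) (i : Fin n) :
    ∃ j, s j = i ∧ hmax s R i = R j := by
  obtain ⟨j0, hj0⟩ := hs i
  have hne : {x | ∃ j, s j = i ∧ R j = x}.Nonempty := ⟨R j0, j0, hj0, rfl⟩
  obtain ⟨j, hj, hx⟩ := hne.csSup_mem (hmax_set_finite s R i)
  exact ⟨j, hj, hx.symm⟩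

lemma le_hmax (s : Fin m → Fin n) (R : Fin m → ℝ) {i : Fin n} {j : Fin m} (hj : s j = i) :
    R j ≤ hmax s R i :=
  le_csSup (hmax_set_finite s R i).bddAbove ⟨j, hj, rfl⟩

lemma hmax_le_add (s : Fin m → Fin n) (hs : Function.Surjective s) (A B : Fin m → ℝ)
    (i : Fin n) (C : ℝ) (h : ∀ j, s j = i → A j ≤ B j + C) :
    hmax s A i ≤ hmax s B i + C := by
  obtain ⟨j, hj, he⟩ := hmax_exists s hs A i
  have := le_hmax s B hj
  have := h j hj
  linarith

lemma polMat_mulVec (π : Fin n → Fin m) (R : Fin m → ℝ) (i : Fin n) :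
    (polMat π *ᵥ R) i = R (π i) := by
  simp [polMat, Matrix.mulVec, dotProduct, ite_mul]

lemma projMat_mulVec (s : Fin m → Fin n) (V : Fin n → ℝ) (j : Fin m) :
    (projMat s *ᵥ V) j = V (s j) := by
  simp [projMat, Matrix.mulVec, dotProduct, ite_mul]

lemma polMat_mul_apply (π : Fin n → Fin m) (F : Matrix (Fin m) (Fin n) ℝ) (i k : Fin n) :
    (polMat π * F) i k = F (π i) k := by
  simp [polMat, Matrix.mul_apply, ite_mul]

lemma stoch_pol {F : Matrix (Fin m) (Fin n) ℝ} (hF : RowStochastic F) (π : Fin n → Fin m) :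
    RowStochastic (polMat π * F) := by
  constructor
  · intro i k; rw [polMat_mul_apply]; exact hF.1 (π i) k
  · intro i
    simp only [polMat_mul_apply]
    exact hF.2 (π i)

lemma mulVec_abs_le {n' : ℕ} (P : Matrix (Fin n') (Fin n) ℝ) (hP : RowStochastic P)
    (x : Fin n → ℝ) (j : Fin n') : |(P *ᵥ x) j| ≤ ‖x‖ := by
  have h1 : (P *ᵥ x) j = ∑ k, P j k * x k := rfl
  rw [h1]
  calc |∑ k, P j k * x k| ≤ ∑ k, |P j k * x k| := Finset.abs_sum_le_sum_abs _ _
    _ = ∑ k, P j k * |x k| := by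
        refine Finset.sum_congr rfl fun k _ => ?_
        rw [abs_mul, abs_of_nonneg (hP.1 j k)]
    _ ≤ ∑ k, P j k * ‖x‖ := by
        refine Finset.sum_le_sum fun k _ => mul_le_mul_of_nonneg_left ?_ (hP.1 j k)
        have := norm_le_pi_norm x k
        rwa [Real.norm_eq_abs] at this
    _ = ‖x‖ := by rw [← Finset.sum_mul, hP.2 j, one_mul]

lemma minprinciple {γ : ℝ} (hγ0 : 0 ≤ γ) (hγ1 : γ < 1) (hn : 1 ≤ n)
    (P : Matrix (Fin n) (Fin n) ℝ) (hP : RowStochastic P)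
    (x v : Fin n → ℝ) (h : ∀ i, x i = v i + γ * (P *ᵥ x) i) (hv : ∀ i, 0 ≤ v i) :
    ∀ i, 0 ≤ x i := by
  have : Nonempty (Fin n) := Fin.pos_iff_nonempty.mp hn
  obtain ⟨i0, -, hmin⟩ := Finset.exists_min_image Finset.univ x Finset.univ_nonempty
  have hkey : x i0 ≤ (P *ᵥ x) i0 := by
    have h1 : (P *ᵥ x) i0 = ∑ k, P i0 k * x k := rfl
    have h2 : x i0 = ∑ k, P i0 k * x i0 := by rw [← Finset.sum_mul, hP.2 i0, one_mul]
    rw [h1, h2]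
    exact Finset.sum_le_sum fun k _ =>
      mul_le_mul_of_nonneg_left (hmin k (Finset.mem_univ k)) (hP.1 i0 k)
  have hx0 : 0 ≤ x i0 := by
    have := h i0
    have := hv i0
    nlinarith [mul_le_mul_of_nonneg_left hkey hγ0]
  intro i
  exact le_trans hx0 (hmin i (Finset.mem_univ i))

lemma det_isUnit {γ : ℝ} (hγ0 : 0 ≤ γ) (hγ1 : γ < 1)
    (P : Matrix (Fin n) (Fin n) ℝ) (hP : RowStochastic P) :
    IsUnit ((1 : Matrix (Fin n) (Fin n) ℝ) - γ • P).det := by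
  rw [isUnit_iff_ne_zero]
  intro h0
  obtain ⟨x, hx0, hx⟩ := Matrix.exists_mulVec_eq_zero_iff.mpr h0
  have hxe : ∀ i, x i = γ * (P *ᵥ x) i := by
    intro i
    have h := congrFun hx i
    rw [Matrix.sub_mulVec, Matrix.smul_mulVec] at h
    simp only [Pi.sub_apply, Matrix.one_mulVec, Pi.smul_apply, smul_eq_mul,
      Pi.zero_apply] at h
    linarith
  have hb : ‖x‖ ≤ γ * ‖x‖ := by
    refine (pi_norm_le_iff_of_nonneg (mul_nonneg hγ0 (norm_nonneg _))).mpr fun i => ?_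
    rw [Real.norm_eq_abs, hxe i, abs_mul, abs_of_nonneg hγ0]
    exact mul_le_mul_of_nonneg_left (mulVec_abs_le P hP x i) hγ0
  have : ‖x‖ = 0 := by nlinarith [norm_nonneg x]
  exact hx0 (norm_eq_zero.mp this)

lemma valueVec_bellman {γ : ℝ} (hγ0 : 0 ≤ γ) (hγ1 : γ < 1)
    (F : Matrix (Fin m) (Fin n) ℝ) (hF : RowStochastic F)
    (π : Fin n → Fin m) (R : Fin m → ℝ) (i : Fin n) :
    valueVec γ F π R i = R (π i) + γ * (F *ᵥ valueVec γ F π R) (π i) := by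
  set A := (1 : Matrix (Fin n) (Fin n) ℝ) - γ • (polMat π * F) with hA
  have hdet := det_isUnit hγ0 hγ1 (polMat π * F) (stoch_pol hF π)
  have h : A *ᵥ valueVec γ F π R = polMat π *ᵥ R := by
    rw [valueVec, Matrix.mulVec_mulVec, ← hA, Matrix.mul_nonsing_inv _ hdet, Matrix.one_mulVec]
  have h2 := congrFun h i
  set V := valueVec γ F π R
  have h3 : (A *ᵥ V) i = V i - γ * ((polMat π * F) *ᵥ V) i := by
    rw [hA, Matrix.sub_mulVec, Matrix.one_mulVec, Matrix.smul_mulVec]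
    simp
  have h4 : ((polMat π * F) *ᵥ V) i = (F *ᵥ V) (π i) := by
    rw [← Matrix.mulVec_mulVec, polMat_mulVec]
  rw [h3, h4, polMat_mulVec] at h2
  linarith

lemma bellman_opt {γ : ℝ} (hn : 1 ≤ n) (hγ0 : 0 ≤ γ) (hγ1 : γ < 1)
    (s : Fin m → Fin n) (hs : Function.Surjective s)
    (F : Matrix (Fin m) (Fin n) ℝ) (hF : RowStochastic F)
    (R0 : Fin m → ℝ) (πs : Fin n → Fin m) (hπs : IsOptimal s γ F R0 πs) (i : Fin n) :
    valueVec γ F πs R0 i = hmax s (R0 + γ • (F *ᵥ valueVec γ F πs R0)) i := by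
  set Vs := valueVec γ F πs R0 with hVs
  set W : Fin m → ℝ := R0 + γ • (F *ᵥ Vs) with hW
  have hWj : ∀ j, W j = R0 j + γ * (F *ᵥ Vs) j := fun j => rfl
  -- greedy policy
  choose πg hπg1 hπg2 using fun i => hmax_exists s hs W i
  have hpg : IsPolicy s πg := hπg1
  set Vg := valueVec γ F πg R0 with hVg
  -- Vs ≤ hmax
  have h1 : ∀ i, Vs i ≤ hmax s W i := by
    intro i
    have := valueVec_bellman hγ0 hγ1 F hF πs R0 i
    rw [← hVs] at this
    calc Vs i = W (πs i) := by rw [hWj, ← this]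
      _ ≤ hmax s W i := le_hmax s W (hπs.1 i)
  -- the comparison vector
  set u : Fin n → ℝ := Vg - Vs with hu
  have hequ : ∀ i, u i = (hmax s W i - Vs i) + γ * ((polMat πg * F) *ᵥ u) i := by
    intro i
    have hg := valueVec_bellman hγ0 hγ1 F hF πg R0 i
    have hsb := valueVec_bellman hγ0 hγ1 F hF πs R0 i
    rw [← hVg] at hg
    rw [← hVs] at hsb
    have hP : ((polMat πg * F) *ᵥ u) i = (F *ᵥ Vg) (πg i) - (F *ᵥ Vs) (πg i) := by
      rw [← Matrix.mulVec_mulVec, polMat_mulVec, hu, Matrix.mulVec_sub]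
      simp
    have hmw : hmax s W i = R0 (πg i) + γ * (F *ᵥ Vs) (πg i) := by
      rw [hπg2 i, hWj]
    have hui : u i = Vg i - Vs i := rfl
    rw [hui, hP, hg, hmw]
    ring
  have hupos : ∀ i, 0 ≤ u i :=
    minprinciple hγ0 hγ1 hn (polMat πg * F) (stoch_pol hF πg) u _
      hequ (fun i => by linarith [h1 i])
  have huneg : ∀ i, u i ≤ 0 := fun i => by
    have := hπs.2 πg hpg i
    rw [← hVg, ← hVs] at this
    simpa [hu] using sub_nonpos.mpr this
  have hu0 : ∀ i, u i = 0 := fun i => le_antisymm (huneg i) (hupos i)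
  have hPu : ((polMat πg * F) *ᵥ u) i = 0 := by
    have : (fun k => ((polMat πg * F) i k) * u k) = fun _ => 0 := by
      funext k; rw [hu0 k, mul_zero]
    show ∑ k, ((polMat πg * F) i k) * u k = 0
    rw [this]; simp
  have := hequ i
  rw [hu0 i, hPu, mul_zero, add_zero] at this
  linarith

end Aux

/-- The full-output-feedback iteration `R_{t+1} = R_t + B h_max(R_t)`:
(i) preserves nonpositivity; (ii) its partial input sums satisfy the value-iteration
recursion `V̂_{t+1} = T_{R₀}(V̂_t)`; (iii) converges geometrically,
`‖V*_{R₀} − V̂_t‖ ≤ γ^t ‖V*_{R₀} − h_max(R₀)‖`. -/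
theorem full_output_feedback_value_iteration {n m : ℕ} (hn : 1 ≤ n) (hm : 1 ≤ m)
    (s : Fin m → Fin n) (hs : Function.Surjective s)
    (γ : ℝ) (hγ0 : 0 ≤ γ) (hγ1 : γ < 1)
    (F : Matrix (Fin m) (Fin n) ℝ) (hF : RowStochastic F)
    (R0 : Fin m → ℝ) (hR0 : R0 ≤ 0)
    (πs : Fin n → Fin m) (hπs : IsOptimal s γ F R0 πs)
    (Rseq : ℕ → Fin m → ℝ) (hinit : Rseq 0 = R0)
    (hstep : ∀ t, Rseq (t + 1) = Rseq t + (γ • F - projMat s) *ᵥ hmax s (Rseq t)) :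
    (∀ t, Rseq t ≤ 0) ∧
      (∀ t, (∑ τ ∈ Finset.range (t + 2), hmax s (Rseq τ)) =
        hmax s (R0 + γ • (F *ᵥ ∑ τ ∈ Finset.range (t + 1), hmax s (Rseq τ)))) ∧
      ∀ t, ‖valueVec γ F πs R0 - ∑ τ ∈ Finset.range (t + 1), hmax s (Rseq τ)‖ ≤
        γ ^ t * ‖valueVec γ F πs R0 - hmax s R0‖ := by
  have hstep' : ∀ t j, Rseq (t + 1) j =
      Rseq t j + γ * (F *ᵥ hmax s (Rseq t)) j - hmax s (Rseq t) (s j) := by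
    intro t j
    rw [hstep t]
    simp only [Pi.add_apply, Matrix.sub_mulVec, Matrix.smul_mulVec, Pi.sub_apply,
      Pi.smul_apply, smul_eq_mul, projMat_mulVec]
    ring
  -- (i)
  have part1 : ∀ t, Rseq t ≤ 0 := by
    intro t
    induction t with
    | zero => rw [hinit]; exact hR0
    | succ t ih =>
      intro j
      have hΔneg : ∀ i, hmax s (Rseq t) i ≤ 0 := by
        intro i
        obtain ⟨j', hj', he⟩ := hmax_exists s hs (Rseq t) i
        rw [he]
        exact ih j'
      have hFΔ : (F *ᵥ hmax s (Rseq t)) j ≤ 0 := by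
        have h1 : (F *ᵥ hmax s (Rseq t)) j = ∑ k, F j k * hmax s (Rseq t) k := rfl
        rw [h1]
        exact Finset.sum_nonpos fun k _ => mul_nonpos_of_nonneg_of_nonpos (hF.1 j k) (hΔneg k)
      have hRΔ : Rseq t j ≤ hmax s (Rseq t) (s j) := le_hmax s (Rseq t) rfl
      have hγF : γ * (F *ᵥ hmax s (Rseq t)) j ≤ 0 := mul_nonpos_of_nonneg_of_nonpos hγ0 hFΔ
      show Rseq (t + 1) j ≤ 0
      rw [hstep' t j]
      linarith
  -- closed form for Rseq (t+1)
  have hform : ∀ t j, Rseq (t + 1) j =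
      R0 j + γ * (F *ᵥ ∑ τ ∈ Finset.range (t + 1), hmax s (Rseq τ)) j
        - (∑ τ ∈ Finset.range (t + 1), hmax s (Rseq τ)) (s j) := by
    intro t
    induction t with
    | zero =>
      intro j
      rw [hstep' 0 j, Finset.sum_range_one, hinit]
    | succ t ih =>
      intro j
      rw [hstep' (t + 1) j, ih j, Finset.sum_range_succ (f := fun τ => hmax s (Rseq τ))
        (n := t + 1), Matrix.mulVec_add]
      simp only [Pi.add_apply]
      ring
  -- shift identity
  have hshift : ∀ t i, hmax s (Rseq (t + 1)) i =
      hmax s (R0 + γ • (F *ᵥ ∑ τ ∈ Finset.range (t + 1), hmax s (Rseq τ))) i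
        - (∑ τ ∈ Finset.range (t + 1), hmax s (Rseq τ)) i := by
    intro t i
    have key : ∀ j, s j = i → Rseq (t + 1) j =
        (R0 + γ • (F *ᵥ ∑ τ ∈ Finset.range (t + 1), hmax s (Rseq τ))) j
          - (∑ τ ∈ Finset.range (t + 1), hmax s (Rseq τ)) i := by
      intro j hj
      rw [hform t j, hj]
      simp only [Pi.add_apply, Pi.smul_apply, smul_eq_mul]
    have h1 : hmax s (Rseq (t + 1)) i ≤
        hmax s (R0 + γ • (F *ᵥ ∑ τ ∈ Finset.range (t + 1), hmax s (Rseq τ))) i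
          + (-((∑ τ ∈ Finset.range (t + 1), hmax s (Rseq τ)) i)) :=
      hmax_le_add s hs _ _ i _ fun j hj => by rw [key j hj]; linarith
    have h2 : hmax s (R0 + γ • (F *ᵥ ∑ τ ∈ Finset.range (t + 1), hmax s (Rseq τ))) i ≤
        hmax s (Rseq (t + 1)) i + (∑ τ ∈ Finset.range (t + 1), hmax s (Rseq τ)) i := by
      refine hmax_le_add s hs _ _ i _ fun j hj => ?_
      rw [key j hj]
      linarith [le_hmax s (Rseq (t + 1)) hj]
    linarith
  -- (ii)
  have part2 : ∀ t, (∑ τ ∈ Finset.range (t + 2), hmax s (Rseq τ)) =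
      hmax s (R0 + γ • (F *ᵥ ∑ τ ∈ Finset.range (t + 1), hmax s (Rseq τ))) := by
    intro t
    rw [Finset.sum_range_succ (f := fun τ => hmax s (Rseq τ)) (n := t + 1)]
    funext i
    simp only [Pi.add_apply]
    linarith [hshift t i]
  refine ⟨part1, part2, ?_⟩
  -- (iii)
  have hbell : ∀ i, valueVec γ F πs R0 i =
      hmax s (R0 + γ • (F *ᵥ valueVec γ F πs R0)) i :=
    bellman_opt hn hγ0 hγ1 s hs F hF R0 πs hπs
  intro t
  induction t with
  | zero =>
    have hb : (∑ τ ∈ Finset.range 1, hmax s (Rseq τ)) = hmax s R0 := by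
      rw [Finset.sum_range_one, hinit]
    rw [hb, pow_zero, one_mul]
  | succ t ih =>
    have hC : (0:ℝ) ≤ γ ^ (t + 1) * ‖valueVec γ F πs R0 - hmax s R0‖ :=
      mul_nonneg (pow_nonneg hγ0 _) (norm_nonneg _)
    refine (pi_norm_le_iff_of_nonneg hC).mpr fun i => ?_
    have hdiff : ∀ j, |(R0 + γ • (F *ᵥ valueVec γ F πs R0)) j -
        (R0 + γ • (F *ᵥ ∑ τ ∈ Finset.range (t + 1), hmax s (Rseq τ))) j| ≤
        γ * ‖valueVec γ F πs R0 - ∑ τ ∈ Finset.range (t + 1), hmax s (Rseq τ)‖ := by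
      intro j
      have h1 : (R0 + γ • (F *ᵥ valueVec γ F πs R0)) j -
          (R0 + γ • (F *ᵥ ∑ τ ∈ Finset.range (t + 1), hmax s (Rseq τ))) j
          = γ * (F *ᵥ (valueVec γ F πs R0 - ∑ τ ∈ Finset.range (t + 1), hmax s (Rseq τ))) j := by
        simp only [Pi.add_apply, Pi.smul_apply, smul_eq_mul, Matrix.mulVec_sub, Pi.sub_apply]
        ring
      rw [h1, abs_mul, abs_of_nonneg hγ0]
      exact mul_le_mul_of_nonneg_left (mulVec_abs_le F hF _ j) hγ0
    have hcontract : |valueVec γ F πs R0 i - (∑ τ ∈ Finset.range (t + 2), hmax s (Rseq τ)) i| ≤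
        γ * ‖valueVec γ F πs R0 - ∑ τ ∈ Finset.range (t + 1), hmax s (Rseq τ)‖ := by
      rw [hbell i, part2 t]
      rw [abs_sub_le_iff]
      constructor
      · have := hmax_le_add s hs (R0 + γ • (F *ᵥ valueVec γ F πs R0))
          (R0 + γ • (F *ᵥ ∑ τ ∈ Finset.range (t + 1), hmax s (Rseq τ))) i
          (γ * ‖valueVec γ F πs R0 - ∑ τ ∈ Finset.range (t + 1), hmax s (Rseq τ)‖)
          (fun j _ => by linarith [(abs_le.mp (hdiff j)).2])
        linarith
      · have := hmax_le_add s hs (R0 + γ • (F *ᵥ ∑ τ ∈ Finset.range (t + 1), hmax s (Rseq τ)))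
          (R0 + γ • (F *ᵥ valueVec γ F πs R0)) i
          (γ * ‖valueVec γ F πs R0 - ∑ τ ∈ Finset.range (t + 1), hmax s (Rseq τ)‖)
          (fun j _ => by linarith [(abs_le.mp (hdiff j)).1])
        linarith
    calc ‖(valueVec γ F πs R0 - ∑ τ ∈ Finset.range (t + 2), hmax s (Rseq τ)) i‖
        = |valueVec γ F πs R0 i - (∑ τ ∈ Finset.range (t + 2), hmax s (Rseq τ)) i| := by
          rw [Real.norm_eq_abs, Pi.sub_apply]
      _ ≤ γ * ‖valueVec γ F πs R0 - ∑ τ ∈ Finset.range (t + 1), hmax s (Rseq τ)‖ := hcontract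
      _ ≤ γ * (γ ^ t * ‖valueVec γ F πs R0 - hmax s R0‖) := mul_le_mul_of_nonneg_left ih hγ0
      _ = γ ^ (t + 1) * ‖valueVec γ F πs R0 - hmax s R0‖ := by ring
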